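/- In the weak-preference variable-population housing market model with the universal domain, for any profile of tie-breakers ▷, the mechanism TTC^▷ satisfies local unanimity, consistency, strategy-proofness, and non-bossiness. -/

import Mathlib

/- Weak-preference variable-population housing market model (Shapley–Scarf).
Agents and objects are identified: `I` is the grand finite set of agents and
object `i` (the endowment of agent `i`) is identified with `i`. A market is a
nonempty `I' : Finset I` with object set `O_{I'} = I'`. A weak preference of
agent `i` on `O_{I'}` is encoded as a relation `R : I → I → Prop` supported on
`I'` (`R a b` meaning "`a` is weakly preferred to `b`") that is complete and
transitive on `I'` and never treats the endowment `i` as indifferent to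
another object (the universal domain consists of all such relations, these
being exactly the restrictions to `O_{I'}` of the members of `𝒰_i`). An
economy in market `I'` is a profile `R : I → I → I → Prop` with `R i` the
preference of agent `i` (only the components of agents `i ∈ I'` matter). A
mechanism assigns to every economy an assignment `I → I` (an allocation being
a bijection of `I'` onto itself). -/

open Finset

variable {I : Type*} [DecidableEq I]

/-- `R` is an admissible weak preference of agent `i` on the objects
`O_{I'} = I'`: supported on `I'`, complete and transitive on `I'`, and the
endowment `i` is not indifferent to any other object. -/
def IsWeakPrefOn (I' : Finset I) (i : I) (R : I → I → Prop) : Prop :=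
  (∀ a b, R a b → a ∈ I' ∧ b ∈ I') ∧
  (∀ a ∈ I', ∀ b ∈ I', R a b ∨ R b a) ∧
  (∀ a b c, R a b → R b c → R a c) ∧
  (∀ o ∈ I', o ≠ i → ¬ (R o i ∧ R i o))

/-- The restriction of a preference to the objects `O_J = J`. -/
def restrW (J : Finset I) (R : I → I → Prop) : I → I → Prop :=
  fun a b => R a b ∧ a ∈ J ∧ b ∈ J

/-- The strict linear order obtained from the weak preference `R` by breaking
every indifference according to the tie-breaker `t` (`a` is preferred to `b`
iff `a ≻ b`, or `a ∼ b` and the tie-breaker favors `a`). -/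
def tieBreak (R : I → I → Prop) (t : LinearOrder I) : I → I → Prop :=
  fun a b => (R a b ∧ ¬ R b a) ∨ (R a b ∧ R b a ∧ t.lt b a)

/-- The maximal element of `S` under the strict relation `r`
(`d` is a junk default, used only if no maximal element exists). -/
noncomputable def bestIn (r : I → I → Prop) (S : Finset I) (d : I) : I :=
  letI := Classical.dec (∃ m ∈ S, ∀ x ∈ S, x ≠ m → r m x)
  if h : ∃ m ∈ S, ∀ x ∈ S, x ≠ m → r m x then h.choose else d

/-- The agents of `S` lying on a cycle of the pointing map `fun i => fav i S`. -/
def cyclicAgents (fav : I → Finset I → I) (S : Finset I) : Finset I :=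
  S.filter fun i => ∃ k ∈ Finset.range S.card, (fun j => fav j S)^[k + 1] i = i

lemma cyclicAgents_subset (fav : I → Finset I → I) (S : Finset I) :
    cyclicAgents fav S ⊆ S := Finset.filter_subset _ _

/-- The TTC procedure on the set `S` of remaining agents: every agent of `S`
lying on a pointing cycle receives the object owned by the agent he points to
and is removed; the procedure is then repeated on the remaining agents.
(Agents outside `S` keep their endowments; for pointing maps induced by
strict preferences a cycle always exists, so the `else` branch is never
reached.) -/
def TTCaux (fav : I → Finset I → I) (S : Finset I) : I → I :=
  if hC : (cyclicAgents fav S).Nonempty then fun i =>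
    if i ∈ cyclicAgents fav S then fav i S else TTCaux fav (S \ cyclicAgents fav S) i
  else id
termination_by S.card
decreasing_by
  exact Finset.card_lt_card (Finset.sdiff_ssubset (cyclicAgents_subset fav S) hC)

/-- `TTC^▷`: the Top Trading Cycles mechanism with fixed tie-breakers
`T = (▷_i)_{i ∈ I}`, applied in market `I'` to the transformed strict profile. -/
noncomputable def TTCtb (T : I → LinearOrder I) (I' : Finset I)
    (R : I → I → I → Prop) : I → I :=
  TTCaux (fun i S => bestIn (tieBreak (R i) (T i)) S i) I'

/-- Local unanimity (weak-preference version): in every economy, whenever a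
nonempty set `J` of agents admits a unanimously best suballocation `μ`
(a bijection of `J` onto `O_J = J` giving every member of `J` his *unique*
best object of `O_{I'}`), the mechanism implements `μ` on `J`. -/
def LocallyUnanimousW (ψ : Finset I → (I → I → I → Prop) → I → I) : Prop :=
  ∀ I' : Finset I, I'.Nonempty → ∀ R : I → I → I → Prop,
    (∀ i ∈ I', IsWeakPrefOn I' i (R i)) →
    ∀ J : Finset I, J ⊆ I' → J.Nonempty → ∀ μ : I → I, Set.BijOn μ ↑J ↑J →
      (∀ i ∈ J, ∀ o ∈ I', o ≠ μ i → R i (μ i) o ∧ ¬ R i o (μ i)) →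
      ∀ i ∈ J, ψ I' R i = μ i

/-- Consistency of a mechanism: if the agents of `I' ∖ J` are assigned exactly
the objects `O_{I' ∖ J}` and are removed, every remaining agent receives the
same object in the reduced economy on `J`. -/
def ConsistentW (ψ : Finset I → (I → I → I → Prop) → I → I) : Prop :=
  ∀ I' : Finset I, I'.Nonempty → ∀ R : I → I → I → Prop,
    (∀ i ∈ I', IsWeakPrefOn I' i (R i)) →
    ∀ J : Finset I, J ⊆ I' → J.Nonempty →
      (I' \ J).image (fun i => ψ I' R i) = I' \ J →
      ∀ i ∈ J, ψ J (fun j => restrW J (R j)) i = ψ I' R i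

/-- Strategy-proofness (weak-preference version): no agent can obtain a
strictly better object by misreporting. -/
def StrategyProofW (ψ : Finset I → (I → I → I → Prop) → I → I) : Prop :=
  ∀ I' : Finset I, I'.Nonempty → ∀ R : I → I → I → Prop,
    (∀ i ∈ I', IsWeakPrefOn I' i (R i)) →
    ∀ i ∈ I', ∀ R' : I → I → Prop, IsWeakPrefOn I' i R' →
      ¬ (R i (ψ I' (Function.update R i R') i) (ψ I' R i) ∧
         ¬ R i (ψ I' R i) (ψ I' (Function.update R i R') i))

/-- Non-bossiness: no agent can change the allocation without changing his own
assignment. -/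
def NonBossyW (ψ : Finset I → (I → I → I → Prop) → I → I) : Prop :=
  ∀ I' : Finset I, I'.Nonempty → ∀ R : I → I → I → Prop,
    (∀ i ∈ I', IsWeakPrefOn I' i (R i)) →
    ∀ i ∈ I', ∀ R' : I → I → Prop, IsWeakPrefOn I' i R' →
      ψ I' (Function.update R i R') i = ψ I' R i →
      ∀ j ∈ I', ψ I' (Function.update R i R') j = ψ I' R j

/-! TTC^▷ is TTC run with the pointing rule `ttcPointer`, under which every agent points to his
best remaining object for the tie-broken strict preference. All four properties hold for TTC with
any pointing rule that stays within the remaining agents and satisfies Chernoff's condition.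

The key fact is that removing any union of current cycles first does not change the outcome:
the other cycles keep their pointers after the removal. Local unanimity holds because a
unanimously best suballocation is a union of cycles at the first step. For strategy-proofness,
whatever `i` gets by misreporting is an object from which a truthful pointing path leads to `i`.
Every object on that path stays available until `i` trades, so `i` weakly prefers his truthful
assignment. For non-bossiness, the cycles of either run that avoid `i` are cycles of the other
run. Removing them and using induction leaves the case where `i` trades at once in both runs,
with the same pointer. For consistency, if the agents outside `J` trade only among themselves,
no cycle crosses the boundary of `J`, so the cycles inside `J` persist in the reduced market. -/

open Function Set

namespace Function

variable {α : Type*} {f g : α → α} {x : α}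

lemma iterate_eq_iterate_of_forall_lt {n : ℕ} (h : ∀ m < n, f (g^[m] x) = g (g^[m] x)) :
    f^[n] x = g^[n] x := by
  induction n with
  | zero => rfl
  | succ n ih =>
    rw [iterate_succ_apply', iterate_succ_apply', ih fun m hm => h m (by omega), h n (by omega)]

lemma mem_periodicPts_of_forall_iterate (hx : x ∈ periodicPts g)
    (h : ∀ n, f (g^[n] x) = g (g^[n] x)) : x ∈ periodicPts f := by
  obtain ⟨p, hp, hper⟩ := hx
  exact mk_mem_periodicPts hp ((iterate_eq_iterate_of_forall_lt fun m _ => h m).trans hper)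

lemma exists_iterate_iterate_eq (hx : x ∈ periodicPts f) (n : ℕ) :
    ∃ m, f^[m] (f^[n] x) = x := by
  obtain ⟨p, hp, hper⟩ := hx
  refine ⟨p * n - n, ?_⟩
  rw [← iterate_add_apply, Nat.sub_add_cancel (Nat.le_mul_of_pos_left n hp)]
  exact (hper.mul_const n).eq

lemma mem_of_iterate_mem {s : Set α} (hs : MapsTo f s s) (hx : x ∈ periodicPts f) {n : ℕ}
    (h : f^[n] x ∈ s) : x ∈ s := by
  obtain ⟨m, hm⟩ := exists_iterate_iterate_eq hx n
  exact hm ▸ hs.iterate m h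

lemma exists_iterate_eq_of_forall_ne {i : α} (h : ∀ y ≠ i, f y = g y) {k : ℕ}
    (hk : g^[k] x = i) : ∃ k', f^[k'] x = i := by
  classical
  have hex : ∃ k, g^[k] x = i := ⟨k, hk⟩
  refine ⟨Nat.find hex, ?_⟩
  rw [iterate_eq_iterate_of_forall_lt fun m hm => h _ (Nat.find_min hex hm), Nat.find_spec hex]

lemma mem_periodicPts_of_bijOn {s : Finset α} (hf : BijOn f s s) (hx : x ∈ s) :
    x ∈ periodicPts f :=
  (show Semiconj Subtype.val (hf.mapsTo.restrict f s s) f from fun _ => rfl).mapsTo_periodicPts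
    ((hf.mapsTo.restrict_inj.mpr hf.injOn).mem_periodicPts ⟨x, hx⟩)

end Function

section Cycles

variable {fav fav' : I → Finset I → I} {S S' : Finset I} {x : I}

lemma mem_periodicPts_of_mem_cyclicAgents (hx : x ∈ cyclicAgents fav S) :
    x ∈ periodicPts (fav · S) := by
  obtain ⟨-, k, -, hk⟩ := Finset.mem_filter.mp hx
  exact mk_mem_periodicPts k.succ_pos hk

lemma mem_cyclicAgents_of_mem_periodicPts (hS : MapsTo (fav · S) S S) (hxS : x ∈ S)
    (hx : x ∈ periodicPts (fav · S)) : x ∈ cyclicAgents fav S := by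
  have hpos := minimalPeriod_pos_of_mem_periodicPts hx
  have hle : minimalPeriod (fav · S) x ≤ S.card := by
    simpa using Finset.card_le_card_of_injOn (s := Finset.range (minimalPeriod (fav · S) x))
      (fun k => (fav · S)^[k] x) (fun k _ => hS.iterate k hxS)
      (by simpa using iterate_injOn_Iio_minimalPeriod)
  refine Finset.mem_filter.mpr ⟨hxS, minimalPeriod (fav · S) x - 1, by simp; omega, ?_⟩
  rw [Nat.sub_add_cancel hpos]
  exact iterate_minimalPeriod

lemma cyclicAgents_nonempty (hS : MapsTo (fav · S) S S) (hne : S.Nonempty) :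
    (cyclicAgents fav S).Nonempty := by
  obtain ⟨x₀, hx₀⟩ := hne
  obtain ⟨m, n, hmn, heq⟩ := S.finite_toSet.exists_lt_map_eq_of_forall_mem
    (f := fun k => (fav · S)^[k] x₀) fun k => hS.iterate k hx₀
  refine ⟨_, mem_cyclicAgents_of_mem_periodicPts hS (hS.iterate m hx₀)
    (mk_mem_periodicPts (n := n - m) (by omega) ?_)⟩
  rw [IsPeriodicPt, IsFixedPt, ← iterate_add_apply, Nat.sub_add_cancel hmn.le]
  exact heq.symm

lemma mapsTo_cyclicAgents (hS : MapsTo (fav · S) S S) :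
    MapsTo (fav · S) (cyclicAgents fav S) (cyclicAgents fav S) := fun _ hx =>
  mem_cyclicAgents_of_mem_periodicPts hS (hS (cyclicAgents_subset _ _ hx))
    ((bijOn_periodicPts _).mapsTo (mem_periodicPts_of_mem_cyclicAgents hx))

lemma mem_cyclicAgents_of_forall_iterate (hS' : MapsTo (fav' · S') S' S')
    (hx : x ∈ cyclicAgents fav S) (hxS' : x ∈ S')
    (h : ∀ n, fav' ((fav · S)^[n] x) S' = fav ((fav · S)^[n] x) S) :
    x ∈ cyclicAgents fav' S' :=
  mem_cyclicAgents_of_mem_periodicPts hS' hxS'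
    (mem_periodicPts_of_forall_iterate (mem_periodicPts_of_mem_cyclicAgents hx) h)

lemma cyclicAgents_congr (hS : MapsTo (fav · S) S S) (h : ∀ j ∈ S, fav j S = fav' j S) :
    cyclicAgents fav S = cyclicAgents fav' S := by
  have hS' : MapsTo (fav' · S) S S := fun j hj => show fav' j S ∈ S from h j hj ▸ hS hj
  ext x
  constructor <;> intro hx
  · exact mem_cyclicAgents_of_forall_iterate hS' hx (cyclicAgents_subset _ _ hx)
      fun n => (h _ (hS.iterate n (cyclicAgents_subset _ _ hx))).symm
  · exact mem_cyclicAgents_of_forall_iterate hS hx (cyclicAgents_subset _ _ hx)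
      fun n => h _ (hS'.iterate n (cyclicAgents_subset _ _ hx))

lemma TTCaux_of_mem_cyclicAgents (hx : x ∈ cyclicAgents fav S) : TTCaux fav S x = fav x S := by
  rw [TTCaux, dif_pos ⟨x, hx⟩, if_pos hx]

lemma TTCaux_of_notMem_cyclicAgents (hx : x ∉ cyclicAgents fav S) :
    TTCaux fav S x = TTCaux fav (S \ cyclicAgents fav S) x := by
  by_cases hC : (cyclicAgents fav S).Nonempty
  · rw [TTCaux, dif_pos hC, if_neg hx]
  · rw [Finset.not_nonempty_iff_eq_empty.mp hC, Finset.sdiff_empty]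

lemma TTCaux_eq_id (h : cyclicAgents fav S = ∅) : TTCaux fav S = id := by
  rw [TTCaux, dif_neg (by simp [h])]

end Cycles

def PointsWithin (fav : I → Finset I → I) : Prop :=
  ∀ U : Finset I, MapsTo (fav · U) U U

/-- Chernoff's condition (Sen's property α) for the choices of the agents of `W` among
subsets of `W`. -/
def IsChernoffOn (fav : I → Finset I → I) (W : Finset I) : Prop :=
  ∀ j ∈ W, ∀ A B : Finset I, A ⊆ B → B ⊆ W → fav j B ∈ A → fav j A = fav j B

structure IsCycleUnion (fav : I → Finset I → I) (S D : Finset I) : Prop where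
  subset_cyclicAgents : D ⊆ cyclicAgents fav S
  mapsTo : MapsTo (fav · S) D D

section CycleUnion

variable {fav : I → Finset I → I} {W S S' D E : Finset I} {x : I}

lemma isCycleUnion_cyclicAgents (hS : MapsTo (fav · S) S S) :
    IsCycleUnion fav S (cyclicAgents fav S) :=
  ⟨subset_rfl, mapsTo_cyclicAgents hS⟩

lemma IsCycleUnion.sdiff (hE : IsCycleUnion fav S E) (hD : IsCycleUnion fav S D) :
    IsCycleUnion fav S (E \ D) where
  subset_cyclicAgents := Finset.sdiff_subset.trans hE.subset_cyclicAgents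
  mapsTo y hy := by
    obtain ⟨hyE, hyD⟩ := Finset.mem_sdiff.mp hy
    refine Finset.mem_sdiff.mpr ⟨hE.mapsTo hyE, fun hfy => hyD ?_⟩
    exact mem_of_iterate_mem (n := 1) hD.mapsTo
      (mem_periodicPts_of_mem_cyclicAgents (hE.subset_cyclicAgents hyE)) hfy

lemma IsCycleUnion.apply_eq (hch : IsChernoffOn fav W) (hSW : S ⊆ W) (hS'S : S' ⊆ S)
    (hD : IsCycleUnion fav S D) (hDS' : D ⊆ S') (hx : x ∈ D) : fav x S' = fav x S :=
  hch x (hSW (hS'S (hDS' hx))) S' S hS'S hSW (hDS' (hD.mapsTo hx))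

lemma IsCycleUnion.mono (hfav : PointsWithin fav) (hch : IsChernoffOn fav W) (hSW : S ⊆ W)
    (hS'S : S' ⊆ S) (hD : IsCycleUnion fav S D) (hDS' : D ⊆ S') : IsCycleUnion fav S' D where
  subset_cyclicAgents _ hx := mem_cyclicAgents_of_forall_iterate (hfav S')
    (hD.subset_cyclicAgents hx) (hDS' hx)
    fun n => hD.apply_eq hch hSW hS'S hDS' (hD.mapsTo.iterate n hx)
  mapsTo y hy := by
    show fav y S' ∈ D
    rw [hD.apply_eq hch hSW hS'S hDS' hy]
    exact hD.mapsTo hy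

lemma isCycleUnion_cyclicAgents_of_notMem {fav' : I → Finset I → I} {i : I}
    (hS : MapsTo (fav · S) S S) (hS' : MapsTo (fav' · S) S S)
    (hagree : ∀ j ≠ i, fav' j = fav j) (hi : i ∉ cyclicAgents fav' S) :
    IsCycleUnion fav S (cyclicAgents fav' S) := by
  have hptr : ∀ y ∈ cyclicAgents fav' S, fav y S = fav' y S := fun y hy =>
    (congrFun (hagree y (ne_of_mem_of_not_mem hy hi)) S).symm
  refine ⟨fun y hy => mem_cyclicAgents_of_forall_iterate hS hy (cyclicAgents_subset _ _ hy)
    fun n => hptr _ ((mapsTo_cyclicAgents hS').iterate n hy), fun y hy => ?_⟩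
  show fav y S ∈ _
  rw [hptr y hy]
  exact mapsTo_cyclicAgents hS' hy

end CycleUnion

section TTC

variable {fav fav' : I → Finset I → I} {W : Finset I}

theorem TTCaux_sdiff_of_isCycleUnion (hfav : PointsWithin fav) (hch : IsChernoffOn fav W)
    {S D : Finset I} (hSW : S ⊆ W) (hD : IsCycleUnion fav S D) {x : I} (hx : x ∉ D) :
    TTCaux fav (S \ D) x = TTCaux fav S x := by
  induction S using Finset.strongInduction generalizing D x with
  | H S ih =>
  rcases D.eq_empty_or_nonempty with rfl | hDne
  · rw [Finset.sdiff_empty]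
  set A := cyclicAgents fav S
  have hAD : IsCycleUnion fav S (A \ D) := (isCycleUnion_cyclicAgents (hfav S)).sdiff hD
  have hADS : A \ D ⊆ S \ D := Finset.sdiff_subset_sdiff (cyclicAgents_subset _ _) le_rfl
  by_cases hxA : x ∈ A
  · have hxAD : x ∈ A \ D := Finset.mem_sdiff.mpr ⟨hxA, hx⟩
    rw [TTCaux_of_mem_cyclicAgents hxA, TTCaux_of_mem_cyclicAgents
      ((hAD.mono hfav hch hSW Finset.sdiff_subset hADS).subset_cyclicAgents hxAD),
      hAD.apply_eq hch hSW Finset.sdiff_subset hADS hxAD]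
  · have hlt : S \ D ⊂ S :=
      Finset.sdiff_ssubset (hD.subset_cyclicAgents.trans (cyclicAgents_subset _ _)) hDne
    rw [← ih _ hlt (Finset.sdiff_subset.trans hSW)
      (hAD.mono hfav hch hSW Finset.sdiff_subset hADS) fun h => hxA (Finset.mem_sdiff.mp h).1,
      sdiff_sdiff_sdiff_cancel_right hD.subset_cyclicAgents, TTCaux_of_notMem_cyclicAgents hxA]

theorem TTCaux_congr (hfav : PointsWithin fav) {S : Finset I}
    (h : ∀ j ∈ S, ∀ U ⊆ S, fav j U = fav' j U) : TTCaux fav S = TTCaux fav' S := by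
  induction S using Finset.strongInduction with
  | H S ih =>
  have hA := cyclicAgents_congr (hfav S) fun j hj => h j hj S subset_rfl
  ext x
  by_cases hx : x ∈ cyclicAgents fav S
  · rw [TTCaux_of_mem_cyclicAgents hx, TTCaux_of_mem_cyclicAgents (hA ▸ hx),
      h x (cyclicAgents_subset _ _ hx) S subset_rfl]
  · rcases (cyclicAgents fav S).eq_empty_or_nonempty with hemp | hne
    · rw [TTCaux_eq_id hemp, TTCaux_eq_id (hA ▸ hemp)]
    have hx' : x ∉ cyclicAgents fav' S := hA ▸ hx
    rw [TTCaux_of_notMem_cyclicAgents hx, TTCaux_of_notMem_cyclicAgents hx', ← hA,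
      ih _ (Finset.sdiff_ssubset (cyclicAgents_subset _ _) hne)
        fun j hj U hU => h j (Finset.sdiff_subset hj) U (hU.trans Finset.sdiff_subset)]

theorem TTCaux_eq_of_bijOn {S J : Finset I} {μ : I → I} (hS : MapsTo (fav · S) S S)
    (hJS : J ⊆ S) (hμ : BijOn μ J J) (hfavμ : ∀ j ∈ J, fav j S = μ j) {j : I}
    (hj : j ∈ J) :
    TTCaux fav S j = μ j := by
  have hper : j ∈ periodicPts (fav · S) := mem_periodicPts_of_forall_iterate
    (mem_periodicPts_of_bijOn hμ hj) fun n => hfavμ _ (hμ.mapsTo.iterate n hj)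
  rw [TTCaux_of_mem_cyclicAgents (mem_cyclicAgents_of_mem_periodicPts hS (hJS hj) hper),
    hfavμ j hj]

theorem TTCaux_opportunity (hfav : PointsWithin fav) (hch : IsChernoffOn fav W)
    {r : I → I → Prop} {i : I} (hbest : ∀ U ⊆ W, ∀ y ∈ U, r (fav i U) y) {S : Finset I}
    (hSW : S ⊆ W) {b : I} (hb : b ∈ S) {k : ℕ} (hk : (fav · S)^[k] b = i) :
    r (TTCaux fav S i) b := by
  induction S using Finset.strongInduction generalizing k with
  | H S ih =>
  set A := cyclicAgents fav S
  by_cases hiA : i ∈ A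
  · rw [TTCaux_of_mem_cyclicAgents hiA]
    exact hbest S hSW b hb
  have hA : A.Nonempty := cyclicAgents_nonempty (hfav S) ⟨i, hk ▸ (hfav S).iterate k hb⟩
  -- `A` is closed under pointing, so a path ending outside `A` never enters it
  have hpath : ∀ m ≤ k, (fav · S)^[m] b ∈ S \ A := fun m hm => by
    refine Finset.mem_sdiff.mpr ⟨(hfav S).iterate m hb, fun hmA => hiA ?_⟩
    rw [← hk, ← Nat.sub_add_cancel hm, iterate_add_apply]
    exact (mapsTo_cyclicAgents (hfav S)).iterate _ hmA
  have hk' : (fav · (S \ A))^[k] b = i := by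
    rw [iterate_eq_iterate_of_forall_lt fun m hm => ?_, hk]
    exact hch _ (hSW ((hfav S).iterate m hb)) _ _ Finset.sdiff_subset hSW
      (by simpa only [iterate_succ_apply'] using hpath (m + 1) hm)
  rw [TTCaux_of_notMem_cyclicAgents hiA]
  exact ih _ (Finset.sdiff_ssubset (cyclicAgents_subset _ _) hA) (Finset.sdiff_subset.trans hSW)
    (hpath 0 k.zero_le) hk'

theorem TTCaux_strategyproof (hfav : PointsWithin fav) (hfav' : PointsWithin fav')
    (hch : IsChernoffOn fav W) {i : I} (hagree : ∀ j ≠ i, fav' j = fav j) {r : I → I → Prop}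
    (hbest : ∀ U ⊆ W, ∀ y ∈ U, r (fav i U) y) {S : Finset I} (hSW : S ⊆ W)
    (hiS : i ∈ S) :
    r (TTCaux fav S i) (TTCaux fav' S i) := by
  induction S using Finset.strongInduction with
  | H S ih =>
  by_cases hiA' : i ∈ cyclicAgents fav' S
  · obtain ⟨k, hk⟩ := exists_iterate_iterate_eq (mem_periodicPts_of_mem_cyclicAgents hiA') 1
    obtain ⟨k', hk'⟩ := exists_iterate_eq_of_forall_ne
      (fun y hy => (congrFun (hagree y hy) S).symm) hk
    rw [TTCaux_of_mem_cyclicAgents hiA']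
    exact TTCaux_opportunity hfav hch hbest hSW (hfav' S hiS) hk'
  · rw [← TTCaux_sdiff_of_isCycleUnion hfav hch hSW
      (isCycleUnion_cyclicAgents_of_notMem (hfav S) (hfav' S) hagree hiA') hiA',
      TTCaux_of_notMem_cyclicAgents hiA']
    exact ih _ (Finset.sdiff_ssubset (cyclicAgents_subset _ _)
      (cyclicAgents_nonempty (hfav' S) ⟨i, hiS⟩)) (Finset.sdiff_subset.trans hSW)
      (Finset.mem_sdiff.mpr ⟨hiS, hiA'⟩)

lemma TTCaux_eq_of_isCycleUnion (hfav : PointsWithin fav) (hfav' : PointsWithin fav')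
    (hch : IsChernoffOn fav W) (hch' : IsChernoffOn fav' W) {S D : Finset I} (hSW : S ⊆ W)
    (hD : IsCycleUnion fav S D) (hD' : IsCycleUnion fav' S D)
    (hptr : ∀ y ∈ D, fav' y S = fav y S)
    (hrest : TTCaux fav' (S \ D) = TTCaux fav (S \ D)) : TTCaux fav' S = TTCaux fav S := by
  ext x
  by_cases hx : x ∈ D
  · rw [TTCaux_of_mem_cyclicAgents (hD'.subset_cyclicAgents hx),
      TTCaux_of_mem_cyclicAgents (hD.subset_cyclicAgents hx), hptr x hx]
  · rw [← TTCaux_sdiff_of_isCycleUnion hfav' hch' hSW hD' hx,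
      ← TTCaux_sdiff_of_isCycleUnion hfav hch hSW hD hx, hrest]

theorem TTCaux_nonbossy (hfav : PointsWithin fav) (hfav' : PointsWithin fav')
    (hch : IsChernoffOn fav W) (hch' : IsChernoffOn fav' W) {i : I}
    (hagree : ∀ j ≠ i, fav' j = fav j) {S : Finset I} (hSW : S ⊆ W)
    (hsame : TTCaux fav' S i = TTCaux fav S i) : TTCaux fav' S = TTCaux fav S := by
  induction S using Finset.strongInduction with
  | H S ih =>
  have hagree_of_notMem {D : Finset I} (hiD : i ∉ D) : ∀ j ∈ D, ∀ U, fav' j U = fav j U :=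
    fun j hj => congrFun (hagree j (ne_of_mem_of_not_mem hj hiD))
  by_cases hiS : i ∈ S
  swap
  · exact TTCaux_congr hfav' fun j hj U _ => hagree_of_notMem hiS j hj U
  have hrec {D : Finset I} (hD : IsCycleUnion fav S D) (hD' : IsCycleUnion fav' S D) (hiD : i ∉ D)
      (hne : D.Nonempty) : TTCaux fav' S = TTCaux fav S := by
    refine TTCaux_eq_of_isCycleUnion hfav hfav' hch hch' hSW hD hD'
      (fun y hy => hagree_of_notMem hiD y hy S) (ih _ ?_ (Finset.sdiff_subset.trans hSW) ?_)
    · exact Finset.sdiff_ssubset (hD.subset_cyclicAgents.trans (cyclicAgents_subset _ _)) hne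
    · rw [TTCaux_sdiff_of_isCycleUnion hfav' hch' hSW hD' hiD,
        TTCaux_sdiff_of_isCycleUnion hfav hch hSW hD hiD, hsame]
  by_cases hiA' : i ∈ cyclicAgents fav' S
  · by_cases hiA : i ∈ cyclicAgents fav S
    · have hptr : ∀ j ∈ S, fav' j S = fav j S := fun j _ => by
        by_cases hji : j = i
        · rw [hji, ← TTCaux_of_mem_cyclicAgents hiA', ← TTCaux_of_mem_cyclicAgents hiA, hsame]
        · rw [hagree j hji]
      have hA := cyclicAgents_congr (hfav S) fun j hj => (hptr j hj).symm
      refine TTCaux_eq_of_isCycleUnion hfav hfav' hch hch' hSW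
        (isCycleUnion_cyclicAgents (hfav S)) (hA ▸ isCycleUnion_cyclicAgents (hfav' S))
        (fun y hy => hptr y (cyclicAgents_subset _ _ hy)) (TTCaux_congr hfav' fun j hj U _ => ?_)
      exact hagree_of_notMem (fun h => (Finset.mem_sdiff.mp h).2 hiA) j hj U
    · exact hrec (isCycleUnion_cyclicAgents (hfav S))
        (isCycleUnion_cyclicAgents_of_notMem (hfav' S) (hfav S)
          (fun j hj => (hagree j hj).symm) hiA)
        hiA (cyclicAgents_nonempty (hfav S) ⟨i, hiS⟩)
  · exact hrec (isCycleUnion_cyclicAgents_of_notMem (hfav S) (hfav' S) hagree hiA')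
      (isCycleUnion_cyclicAgents (hfav' S)) hiA' (cyclicAgents_nonempty (hfav' S) ⟨i, hiS⟩)

theorem TTCaux_inter (hfav : PointsWithin fav) (hch : IsChernoffOn fav W) {S J : Finset I}
    (hSW : S ⊆ W) (hJ : ∀ x ∈ S, x ∉ J → TTCaux fav S x ∉ J) {j : I} (hjS : j ∈ S)
    (hjJ : j ∈ J) : TTCaux fav (S ∩ J) j = TTCaux fav S j := by
  induction S using Finset.strongInduction with
  | H S ih =>
  set A := cyclicAgents fav S
  have hAJ : IsCycleUnion fav S (A \ J) := by
    refine ⟨Finset.sdiff_subset, fun y hy => ?_⟩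
    obtain ⟨hyA, hyJ⟩ := Finset.mem_sdiff.mp hy
    have hfy := hJ y (cyclicAgents_subset _ _ hyA) hyJ
    rw [TTCaux_of_mem_cyclicAgents hyA] at hfy
    exact Finset.mem_sdiff.mpr ⟨mapsTo_cyclicAgents (hfav S) hyA, hfy⟩
  have hAJ' : IsCycleUnion fav S (A ∩ J) := by
    have h := (isCycleUnion_cyclicAgents (hfav S)).sdiff hAJ
    rwa [Finset.sdiff_sdiff_self_left] at h
  have hsub : A ∩ J ⊆ S ∩ J := Finset.inter_subset_inter_right (cyclicAgents_subset _ _)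
  have hD := hAJ'.mono hfav hch hSW Finset.inter_subset_left hsub
  by_cases hjA : j ∈ A
  · have hjAJ : j ∈ A ∩ J := Finset.mem_inter.mpr ⟨hjA, hjJ⟩
    rw [TTCaux_of_mem_cyclicAgents (hD.subset_cyclicAgents hjAJ),
      hAJ'.apply_eq hch hSW Finset.inter_subset_left hsub hjAJ, TTCaux_of_mem_cyclicAgents hjA]
  · rw [← TTCaux_sdiff_of_isCycleUnion hfav hch (Finset.inter_subset_left.trans hSW) hD
      fun h => hjA (Finset.mem_inter.mp h).1,
      show (S ∩ J) \ (A ∩ J) = (S \ A) ∩ J from (inf_sdiff_distrib_right S A J).symm,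
      TTCaux_of_notMem_cyclicAgents hjA]
    refine ih _ (Finset.sdiff_ssubset (cyclicAgents_subset _ _)
      (cyclicAgents_nonempty (hfav S) ⟨j, hjS⟩)) (Finset.sdiff_subset.trans hSW)
      (fun x hx hxJ => ?_) (Finset.mem_sdiff.mpr ⟨hjS, hjA⟩)
    rw [← TTCaux_of_notMem_cyclicAgents (Finset.mem_sdiff.mp hx).2]
    exact hJ x (Finset.mem_sdiff.mp hx).1 hxJ

end TTC

section BestIn

variable {α : Type*} {r r' : α → α → Prop} {U : Finset α} {d m : α}

lemma Finset.exists_greatest_of_strictTotal (hirr : ∀ a, ¬ r a a)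
    (htrans : ∀ a b c, r a b → r b c → r a c)
    (htot : ∀ a ∈ U, ∀ b ∈ U, a ≠ b → r a b ∨ r b a) (hne : U.Nonempty) :
    ∃ m ∈ U, ∀ x ∈ U, x ≠ m → r m x := by
  let _ : IsStrictOrder α r := { irrefl := hirr, trans := htrans }
  let _ := partialOrderOfSO r
  obtain ⟨m, hmU, hmin⟩ := U.exists_minimal hne
  refine ⟨m, hmU, fun x hx hxm => (htot m hmU x hx hxm.symm).resolve_right fun hxm' => ?_⟩
  obtain h | h := hmin hx (Or.inr hxm')
  · exact hxm h.symm
  · exact hirr x (htrans _ _ _ hxm' h)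

lemma bestIn_spec (hirr : ∀ a, ¬ r a a) (htrans : ∀ a b c, r a b → r b c → r a c)
    (htot : ∀ a ∈ U, ∀ b ∈ U, a ≠ b → r a b ∨ r b a) (hne : U.Nonempty) :
    bestIn r U d ∈ U ∧ ∀ x ∈ U, x ≠ bestIn r U d → r (bestIn r U d) x := by
  have hex := Finset.exists_greatest_of_strictTotal hirr htrans htot hne
  rw [bestIn, dif_pos hex]
  exact hex.choose_spec

lemma bestIn_eq (hasymm : ∀ a b, r a b → ¬ r b a) (hm : m ∈ U)
    (hmax : ∀ x ∈ U, x ≠ m → r m x) : bestIn r U d = m := by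
  have hex : ∃ m ∈ U, ∀ x ∈ U, x ≠ m → r m x := ⟨m, hm, hmax⟩
  rw [bestIn, dif_pos hex]
  obtain ⟨hc, hcmax⟩ := hex.choose_spec
  by_contra hne
  exact hasymm _ _ (hcmax m hm (Ne.symm hne)) (hmax _ hc hne)

lemma bestIn_mem_or_eq_default : bestIn r U d ∈ U ∨ bestIn r U d = d := by
  rw [bestIn]
  split_ifs with hex
  exacts [Or.inl hex.choose_spec.1, Or.inr rfl]

lemma bestIn_congr (h : ∀ a ∈ U, ∀ b ∈ U, r a b ↔ r' a b) :
    bestIn r U d = bestIn r' U d := by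
  have : (fun m => m ∈ U ∧ ∀ x ∈ U, x ≠ m → r m x) =
      (fun m => m ∈ U ∧ ∀ x ∈ U, x ≠ m → r' m x) := by
    ext m
    exact and_congr_right fun hm => forall₂_congr fun x hx => imp_congr_right fun _ => h m hm x hx
  unfold bestIn
  rw [this]

end BestIn

section TieBreak

variable {α : Type*} {R : α → α → Prop} {t : LinearOrder α} {a b c : α}

lemma rel_of_tieBreak (h : tieBreak R t a b) : R a b :=
  h.elim And.left And.left

lemma tieBreak_asymm (h : tieBreak R t a b) : ¬ tieBreak R t b a := by
  let _ := t
  intro h'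
  rcases h with ⟨-, hba⟩ | ⟨hab, -, hlt⟩ <;>
    rcases h' with ⟨hba', hab'⟩ | ⟨hba', -, hlt'⟩
  exacts [hba hba', hba hba', hab' hab, lt_asymm hlt hlt']

lemma tieBreak_trans (htrans : ∀ a b c, R a b → R b c → R a c) (hab : tieBreak R t a b)
    (hbc : tieBreak R t b c) : tieBreak R t a c := by
  let _ := t
  have hRab := rel_of_tieBreak hab
  have hRbc := rel_of_tieBreak hbc
  have hac := htrans _ _ _ hRab hRbc
  by_cases hca : R c a
  · obtain ⟨-, h₁⟩ | ⟨-, -, h₁⟩ := hab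
    · exact absurd (htrans _ _ _ hRbc hca) h₁
    obtain ⟨-, h₂⟩ | ⟨-, -, h₂⟩ := hbc
    · exact absurd (htrans _ _ _ hca hRab) h₂
    exact Or.inr ⟨hac, hca, h₂.trans h₁⟩
  · exact Or.inl ⟨hac, hca⟩

lemma tieBreak_or_tieBreak (h : R a b ∨ R b a) (hne : a ≠ b) :
    tieBreak R t a b ∨ tieBreak R t b a := by
  let _ := t
  by_cases hab : R a b <;> by_cases hba : R b a
  · rcases hne.lt_or_gt with hlt | hlt
    exacts [Or.inr (Or.inr ⟨hba, hab, hlt⟩), Or.inl (Or.inr ⟨hab, hba, hlt⟩)]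
  · exact Or.inl (Or.inl ⟨hab, hba⟩)
  · exact Or.inr (Or.inl ⟨hba, hab⟩)
  · exact (h.elim hab hba).elim

end TieBreak

noncomputable def ttcPointer {α : Type*} (T : α → LinearOrder α) (R : α → α → α → Prop)
    (j : α) (U : Finset α) : α :=
  bestIn (tieBreak (R j) (T j)) U j

section TTCPointer

variable {α : Type*} (T : α → LinearOrder α) {R : α → α → α → Prop} {I' U : Finset α}
  {i : α}

lemma pointsWithin_ttcPointer (R : α → α → α → Prop) : PointsWithin (ttcPointer T R) :=
  fun U j hj => by
    show bestIn _ U j ∈ U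
    rcases bestIn_mem_or_eq_default (r := tieBreak (R j) (T j)) (U := U) (d := j) with h | h
    · exact h
    · rw [h]
      exact hj

lemma ttcPointer_spec (hR : IsWeakPrefOn I' i (R i)) (hU : U ⊆ I') (hne : U.Nonempty) :
    ttcPointer T R i U ∈ U ∧
      ∀ x ∈ U, x ≠ ttcPointer T R i U → tieBreak (R i) (T i) (ttcPointer T R i U) x := by
  obtain ⟨-, htot, htrans, -⟩ := hR
  exact bestIn_spec (fun _ h => tieBreak_asymm h h) (fun _ _ _ => tieBreak_trans htrans)
    (fun a ha b hb => tieBreak_or_tieBreak (htot a (hU ha) b (hU hb))) hne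

lemma ttcPointer_best (hR : IsWeakPrefOn I' i (R i)) (hU : U ⊆ I') {x : α} (hx : x ∈ U) :
    R i (ttcPointer T R i U) x := by
  obtain ⟨hmem, hmax⟩ := ttcPointer_spec T hR hU ⟨x, hx⟩
  by_cases hne : x = ttcPointer T R i U
  · obtain ⟨-, htot, -, -⟩ := hR
    rw [hne]
    exact (htot _ (hU hmem) _ (hU hmem)).elim id id
  · exact rel_of_tieBreak (hmax x hx hne)

lemma isChernoffOn_ttcPointer (hR : ∀ i ∈ I', IsWeakPrefOn I' i (R i)) :
    IsChernoffOn (ttcPointer T R) I' := fun j hj _ _ hAB hBI' hmem =>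
  bestIn_eq (fun _ _ => tieBreak_asymm) hmem fun x hx hne =>
    (ttcPointer_spec T (hR j hj) hBI' ⟨_, hAB hmem⟩).2 x (hAB hx) hne

lemma ttcPointer_eq_of_unique_best {m : α} (hm : m ∈ I')
    (hbest : ∀ o ∈ I', o ≠ m → R i m o ∧ ¬ R i o m) : ttcPointer T R i I' = m :=
  bestIn_eq (fun _ _ => tieBreak_asymm) hm fun x hx hne => Or.inl (hbest x hx hne)

lemma ttcPointer_restrW {J : Finset α} (hU : U ⊆ J) :
    ttcPointer T (fun j => restrW J (R j)) i U = ttcPointer T R i U :=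
  bestIn_congr fun a ha b hb => by simp [tieBreak, restrW, hU ha, hU hb]

lemma ttcPointer_update_of_ne [DecidableEq α] {R' : α → α → Prop} {j : α} (hj : j ≠ i) :
    ttcPointer T (Function.update R i R') j = ttcPointer T R j := by
  unfold ttcPointer
  rw [Function.update_of_ne hj]

lemma isWeakPrefOn_update [DecidableEq α] {R' : α → α → Prop}
    (hR : ∀ k ∈ I', IsWeakPrefOn I' k (R k)) (hR' : IsWeakPrefOn I' i R') :
    ∀ k ∈ I', IsWeakPrefOn I' k (Function.update R i R' k) := fun k hk => by
  rcases eq_or_ne k i with rfl | hki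
  · simpa using hR'
  · simpa [hki] using hR k hk

end TTCPointer

lemma TTCtb_eq (T : I → LinearOrder I) (I' : Finset I) (R : I → I → I → Prop) :
    TTCtb T I' R = TTCaux (ttcPointer T R) I' := rfl

theorem stmt_9_general {I : Type*} [DecidableEq I]
    (T : I → LinearOrder I) :
    LocallyUnanimousW (TTCtb T) ∧ ConsistentW (TTCtb T) ∧
      StrategyProofW (TTCtb T) ∧ NonBossyW (TTCtb T) := by
  refine ⟨?_, ?_, ?_, ?_⟩
  · intro I' _ R _ J hJI' _ μ hμ hbest i hi
    exact TTCaux_eq_of_bijOn (pointsWithin_ttcPointer T R I') hJI' hμ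
      (fun j hj => ttcPointer_eq_of_unique_best T (hJI' (hμ.mapsTo hj)) (hbest j hj)) hi
  · intro I' _ R hR J hJI' _ himg i hi
    have hJ : ∀ x ∈ I', x ∉ J → TTCtb T I' R x ∉ J := fun x hx hxJ => by
      have := Finset.mem_image_of_mem (TTCtb T I' R) (Finset.mem_sdiff.mpr ⟨hx, hxJ⟩)
      exact (Finset.mem_sdiff.mp (himg ▸ this)).2
    have hcons := TTCaux_inter (pointsWithin_ttcPointer T R) (isChernoffOn_ttcPointer T hR)
      subset_rfl hJ (hJI' hi) hi
    rw [Finset.inter_eq_right.mpr hJI'] at hcons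
    rw [TTCtb_eq, TTCaux_congr (pointsWithin_ttcPointer T _) fun j _ U hU => ttcPointer_restrW T hU]
    exact hcons
  · rintro I' _ R hR i hi R' _ ⟨-, hworse⟩
    exact hworse (TTCaux_strategyproof (pointsWithin_ttcPointer T R) (pointsWithin_ttcPointer T _)
      (isChernoffOn_ttcPointer T hR) (fun j hj => ttcPointer_update_of_ne T hj)
      (fun U hU y hy => ttcPointer_best T (hR i hi) hU hy) subset_rfl hi)
  · intro I' _ R hR i _ R' hR' hsame j _
    exact congrFun (TTCaux_nonbossy (pointsWithin_ttcPointer T R) (pointsWithin_ttcPointer T _)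
      (isChernoffOn_ttcPointer T hR) (isChernoffOn_ttcPointer T (isWeakPrefOn_update hR hR'))
      (fun k hk => ttcPointer_update_of_ne T hk) subset_rfl hsame) j

/-- In the weak-preference variable-population housing market
model with the universal domain, for any profile of tie-breakers `▷`, the
mechanism `TTC^▷` satisfies local unanimity, consistency, strategy-proofness,
and non-bossiness. -/
theorem stmt_9 {I : Type*} [DecidableEq I] [Fintype I] (hn : 3 ≤ Fintype.card I)
    (T : I → LinearOrder I) :
    LocallyUnanimousW (TTCtb T) ∧ ConsistentW (TTCtb T) ∧
      StrategyProofW (TTCtb T) ∧ NonBossyW (TTCtb T) :=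
  stmt_9_general T
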